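/- Let H ∈ (0,1) with H ≠ 1/2 and T > 0. Define, for 0 < h ≤ t ≤ T − h, Q(t,h) := (4 − 2^{2H}) h^{2H} − 2^{2H−1}(t+h)^{2H} − 3·2^{2H} t^{2H} − 2^{2H−1}(t−h)^{2H} + 2(2t+h)^{2H} + 2(2t−h)^{2H} (this equals E[(S^H_{t+h} − 2S^H_t + S^H_{t−h})²] for the sub-fractional Brownian motion S^H). Then liminf_{h→0+} sup_{h≤t≤T−h} | Q(t,h)/h^{2H} − (4 − 2^{2H}) | > 0; in particular it is not the case that sup_{h≤t≤T−h} |Q(t,h)/h^{2H} − (4 − 2^{2H})| → 0 as h → 0+. -/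

import Mathlib

/-!
At `t = h` the normalised error does not depend on `h`: it is `|Δ⁴(k ↦ k ^ (2H))(0)| / 2`, where
`Δ⁴(k ↦ k ^ u)(0) = 4 ^ u - 4 * 3 ^ u + 6 * 2 ^ u - 4`. This exponential sum vanishes at
`u = 1, 2, 3` and, by Rolle's theorem applied twice, nowhere else, so it is nonzero for
`u = 2H ∈ (0, 2) \ {1}`. On the other hand, `Q(t, h) - (4 - 2 ^ (2H)) h ^ (2H)` is a combination of
two second differences of `x ↦ x ^ (2H)` with step `h`, each `O(h ^ (2H))`. So the suprema stay
bounded (without this, `liminf` in `ℝ` would be a junk value) and their liminf is at least the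
diagonal value.
-/

open Real Set Filter

/-- `Q(t,h) = E[(S^H_{t+h} − 2S^H_t + S^H_{t−h})²]` for sub-fractional Brownian motion. -/
noncomputable def subfBmQ (H t h : ℝ) : ℝ :=
  (4 - 2 ^ (2*H)) * h ^ (2*H) - 2 ^ (2*H - 1) * (t + h) ^ (2*H) - 3 * 2 ^ (2*H) * t ^ (2*H)
    - 2 ^ (2*H - 1) * (t - h) ^ (2*H) + 2 * (2*t + h) ^ (2*H) + 2 * (2*t - h) ^ (2*H)

theorem exists_strictMono_deriv_eq_zero {f f' : ℝ → ℝ} (hf : ∀ x, HasDerivAt f (f' x) x)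
    {n : ℕ} {x : Fin (n + 1) → ℝ} (hx : StrictMono x) (hfx : ∀ i, f (x i) = 0) :
    ∃ y : Fin n → ℝ, StrictMono y ∧ ∀ i, f' (y i) = 0 := by
  have hcont : Continuous f := continuous_iff_continuousAt.2 fun x => (hf x).continuousAt
  have hrolle (i : Fin n) : ∃ c ∈ Ioo (x i.castSucc) (x i.succ), f' c = 0 :=
    exists_hasDerivAt_eq_zero (hx i.castSucc_lt_succ) hcont.continuousOn
      ((hfx _).trans (hfx _).symm) fun c _ => hf c
  choose y hy hy0 using hrolle
  refine ⟨y, fun i j hij => ?_, hy0⟩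
  calc y i < x i.succ := (hy i).2
    _ ≤ x j.castSucc := hx.monotone (Fin.succ_le_castSucc_iff.2 hij)
    _ < y j := (hy j).1

/-- For `u ≠ 0` this is the fourth forward difference of `k ↦ k ^ u` at `0`, so it vanishes at
`u = 1, 2, 3`. -/
noncomputable def fourthDiffRpow (u : ℝ) : ℝ := 4 ^ u - 4 * 3 ^ u + 6 * 2 ^ u - 4

noncomputable def scaledDerivFourthDiffRpow (u : ℝ) : ℝ :=
  log 4 * 2 ^ u - 4 * log 3 * (3 / 2) ^ u + 6 * log 2

lemma fourthDiffRpow_natCast_eq_zero {n : ℕ} (h1 : 1 ≤ n) (h3 : n ≤ 3) :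
    fourthDiffRpow n = 0 := by
  simp only [fourthDiffRpow, Real.rpow_natCast]
  interval_cases n <;> norm_num

lemma hasDerivAt_fourthDiffRpow (u : ℝ) :
    HasDerivAt fourthDiffRpow (2 ^ u * scaledDerivFourthDiffRpow u) u := by
  have h (a : ℝ) (ha : 0 < a) := (Real.hasStrictDerivAt_const_rpow ha u).hasDerivAt
  have h3 : (3 : ℝ) ^ u = 2 ^ u * (3 / 2) ^ u := by
    rw [← Real.mul_rpow (by norm_num) (by norm_num)]; norm_num
  have h4 : (4 : ℝ) ^ u = 2 ^ u * 2 ^ u := by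
    rw [← Real.mul_rpow (by norm_num) (by norm_num)]; norm_num
  refine ((((h 4 (by norm_num)).sub ((h 3 (by norm_num)).const_mul 4)).add
    ((h 2 (by norm_num)).const_mul 6)).sub_const 4).congr_deriv ?_
  rw [scaledDerivFourthDiffRpow, h3, h4]
  ring

lemma hasDerivAt_scaledDerivFourthDiffRpow (u : ℝ) :
    HasDerivAt scaledDerivFourthDiffRpow
      (log 4 * log 2 * 2 ^ u - 4 * log 3 * log (3 / 2) * (3 / 2) ^ u) u := by
  have h (a : ℝ) (ha : 0 < a) := (Real.hasStrictDerivAt_const_rpow ha u).hasDerivAt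
  exact ((((h 2 (by norm_num)).const_mul (log 4)).sub
    ((h (3 / 2) (by norm_num)).const_mul (4 * log 3))).add_const (6 * log 2)).congr_deriv
    (by ring)

/-- After division by `(3 / 2) ^ s`, the derivative is an affine function of the strictly
monotone `(4 / 3) ^ s`. -/
lemma eq_of_deriv_scaledDerivFourthDiffRpow_eq_zero {s₁ s₂ : ℝ}
    (h₁ : log 4 * log 2 * 2 ^ s₁ - 4 * log 3 * log (3 / 2) * (3 / 2) ^ s₁ = 0)
    (h₂ : log 4 * log 2 * 2 ^ s₂ - 4 * log 3 * log (3 / 2) * (3 / 2) ^ s₂ = 0) :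
    s₁ = s₂ := by
  have hlevel (s : ℝ) (hs : log 4 * log 2 * 2 ^ s - 4 * log 3 * log (3 / 2) * (3 / 2) ^ s = 0) :
      (4 / 3 : ℝ) ^ s = 4 * log 3 * log (3 / 2) / (log 4 * log 2) := by
    have hsplit : (2 : ℝ) ^ s = (3 / 2) ^ s * (4 / 3) ^ s := by
      rw [← Real.mul_rpow (by norm_num) (by norm_num)]; norm_num
    have hcoef : 0 < log 4 * log 2 := mul_pos (log_pos (by norm_num)) (log_pos (by norm_num))
    rw [eq_div_iff hcoef.ne']
    refine mul_left_cancel₀ (Real.rpow_pos_of_pos (by norm_num : (0 : ℝ) < 3 / 2) s).ne' ?_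
    linear_combination hs - log 4 * log 2 * hsplit
  exact (Real.rpow_right_inj (by norm_num) (by norm_num)).1
    ((hlevel s₁ h₁).trans (hlevel s₂ h₂).symm)

lemma not_four_zeros_fourthDiffRpow {a b c d : ℝ} (hab : a < b) (hbc : b < c) (hcd : c < d)
    (ha : fourthDiffRpow a = 0) (hb : fourthDiffRpow b = 0) (hc : fourthDiffRpow c = 0)
    (hd : fourthDiffRpow d = 0) : False := by
  obtain ⟨y, hy, hy0⟩ := exists_strictMono_deriv_eq_zero hasDerivAt_fourthDiffRpow
    (x := ![a, b, c, d]) (by simp [Fin.strictMono_iff_lt_succ, Fin.forall_fin_succ, *])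
    (by simp [Fin.forall_fin_succ, *])
  have hy0' (i : Fin 3) : scaledDerivFourthDiffRpow (y i) = 0 :=
    (mul_eq_zero.1 (hy0 i)).resolve_left (Real.rpow_pos_of_pos two_pos _).ne'
  obtain ⟨z, hz, hz0⟩ :=
    exists_strictMono_deriv_eq_zero hasDerivAt_scaledDerivFourthDiffRpow hy hy0'
  exact hz.injective.ne (by decide : (0 : Fin 2) ≠ 1)
    (eq_of_deriv_scaledDerivFourthDiffRpow_eq_zero (hz0 0) (hz0 1))

lemma fourthDiffRpow_ne_zero {u : ℝ} (h1 : u ≠ 1) (h2 : u ≠ 2) (h3 : u ≠ 3) :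
    fourthDiffRpow u ≠ 0 := by
  have z1 := fourthDiffRpow_natCast_eq_zero (n := 1) le_rfl (by norm_num)
  have z2 := fourthDiffRpow_natCast_eq_zero (n := 2) (by norm_num) (by norm_num)
  have z3 := fourthDiffRpow_natCast_eq_zero (n := 3) (by norm_num) le_rfl
  push_cast at z1 z2 z3
  intro hu
  rcases h1.lt_or_gt with hu1 | hu1
  · exact not_four_zeros_fourthDiffRpow hu1 one_lt_two (by norm_num) hu z1 z2 z3
  rcases h2.lt_or_gt with hu2 | hu2
  · exact not_four_zeros_fourthDiffRpow hu1 hu2 (by norm_num) z1 hu z2 z3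
  rcases h3.lt_or_gt with hu3 | hu3
  · exact not_four_zeros_fourthDiffRpow one_lt_two hu2 hu3 z1 z2 hu z3
  · exact not_four_zeros_fourthDiffRpow one_lt_two (by norm_num) hu3 z1 z2 z3 hu

lemma abs_one_add_rpow_add_one_sub_rpow_sub_two_le_of_le_one {u s : ℝ} (hu0 : 0 ≤ u)
    (hu1 : u ≤ 1) (hs0 : 0 ≤ s) (hs1 : s ≤ 1) :
    |(1 + s) ^ u + (1 - s) ^ u - 2| ≤ s ^ u := by
  have hplus : (1 + s) ^ u ≤ 1 + s ^ u := by
    simpa using Real.rpow_add_le_add_rpow zero_le_one hs0 hu0 hu1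
  have hminus : 1 ≤ (1 - s) ^ u + s ^ u := by
    simpa using Real.rpow_add_le_add_rpow (sub_nonneg.2 hs1) hs0 hu0 hu1
  have hplus_ge : 1 ≤ (1 + s) ^ u := Real.one_le_rpow (by linarith) hu0
  have hminus_le : (1 - s) ^ u ≤ 1 := Real.rpow_le_one (by linarith) (by linarith) hu0
  rw [abs_le]
  constructor <;> linarith

/-- Here `X = (1 + s) ^ u` and `Y = (1 - s) ^ u` satisfy `X * Y ≤ 1 ≤ X`, hence
`X + Y - 2 ≤ (X - 1) ^ 2 / X`, and `X - 1 ≤ 3 * s`. -/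
lemma one_add_rpow_add_one_sub_rpow_sub_two_mem_Icc_of_one_le {u s : ℝ} (hu1 : 1 ≤ u)
    (hu2 : u ≤ 2) (hs0 : 0 ≤ s) (hs1 : s ≤ 1) :
    (1 + s) ^ u + (1 - s) ^ u - 2 ∈ Icc 0 (9 * s ^ u) := by
  set X := (1 + s) ^ u
  set Y := (1 - s) ^ u
  have hX : 1 + u * s ≤ X := one_add_mul_self_le_rpow_one_add (by linarith) hu1
  have hY : 1 + u * -s ≤ Y := one_add_mul_self_le_rpow_one_add (by linarith) hu1
  have hXY : X * Y ≤ 1 := by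
    rw [← Real.mul_rpow (by linarith) (by linarith)]
    exact Real.rpow_le_one (by nlinarith) (by nlinarith) (by linarith)
  have hX3 : X ≤ 1 + 3 * s := by
    calc X ≤ (1 + s) ^ (2 : ℝ) := Real.rpow_le_rpow_of_exponent_le (by linarith) hu2
      _ ≤ 1 + 3 * s := by rw [Real.rpow_two]; nlinarith
  have hs2 : s ^ (2 : ℝ) ≤ s ^ u := Real.rpow_le_rpow_of_exponent_ge' hs0 hs1 (by linarith) hu2
  rw [Real.rpow_two] at hs2
  have hD : 0 ≤ X + Y - 2 := by linarith
  refine ⟨hD, ?_⟩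
  calc X + Y - 2 ≤ X * (X + Y - 2) := le_mul_of_one_le_left hD (by nlinarith)
    _ ≤ (X - 1) ^ 2 := by nlinarith
    _ ≤ (3 * s) ^ 2 := pow_le_pow_left₀ (by nlinarith) (by linarith) 2
    _ ≤ 9 * s ^ u := by linarith

lemma abs_one_add_rpow_add_one_sub_rpow_sub_two_le {u s : ℝ} (hu0 : 0 ≤ u) (hu2 : u ≤ 2)
    (hs0 : 0 ≤ s) (hs1 : s ≤ 1) :
    |(1 + s) ^ u + (1 - s) ^ u - 2| ≤ 9 * s ^ u := by
  rcases le_total u 1 with hu1 | hu1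
  · have := abs_one_add_rpow_add_one_sub_rpow_sub_two_le_of_le_one hu0 hu1 hs0 hs1
    linarith [Real.rpow_nonneg hs0 u]
  · obtain ⟨hlow, hup⟩ :=
      one_add_rpow_add_one_sub_rpow_sub_two_mem_Icc_of_one_le hu1 hu2 hs0 hs1
    rwa [abs_of_nonneg hlow]

lemma abs_add_rpow_add_sub_rpow_sub_two_mul_rpow_le {u a h : ℝ} (hu0 : 0 ≤ u) (hu2 : u ≤ 2)
    (hh : 0 < h) (hha : h ≤ a) :
    |(a + h) ^ u + (a - h) ^ u - 2 * a ^ u| ≤ 9 * h ^ u := by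
  have ha : 0 < a := hh.trans_le hha
  obtain ⟨s, hs0, hs1, rfl⟩ : ∃ s, 0 ≤ s ∧ s ≤ 1 ∧ h = a * s :=
    ⟨h / a, by positivity, (div_le_one ha).2 hha, by field_simp⟩
  have hscale (c : ℝ) (hc : 0 ≤ c) : (a * c) ^ u = a ^ u * c ^ u := Real.mul_rpow ha.le hc
  have hau : 0 < a ^ u := Real.rpow_pos_of_pos ha u
  rw [show a + a * s = a * (1 + s) by ring, show a - a * s = a * (1 - s) by ring,
    hscale _ (by linarith), hscale _ (by linarith), hscale _ hs0,
    show a ^ u * (1 + s) ^ u + a ^ u * (1 - s) ^ u - 2 * a ^ u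
      = a ^ u * ((1 + s) ^ u + (1 - s) ^ u - 2) by ring,
    abs_mul, abs_of_pos hau, mul_left_comm]
  exact mul_le_mul_of_nonneg_left (abs_one_add_rpow_add_one_sub_rpow_sub_two_le hu0 hu2 hs0 hs1)
    hau.le

lemma two_mul_two_rpow_sub_one (u : ℝ) : 2 * (2 : ℝ) ^ (u - 1) = 2 ^ u := by
  rw [Real.rpow_sub two_pos, Real.rpow_one]; ring

lemma subfBmQ_sub_eq (H : ℝ) {t : ℝ} (ht : 0 ≤ t) (h : ℝ) :
    subfBmQ H t h - (4 - 2 ^ (2*H)) * h ^ (2*H)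
      = 2 * ((2*t + h) ^ (2*H) + (2*t - h) ^ (2*H) - 2 * (2*t) ^ (2*H))
        - 2 ^ (2*H - 1) * ((t + h) ^ (2*H) + (t - h) ^ (2*H) - 2 * t ^ (2*H)) := by
  rw [subfBmQ, Real.mul_rpow zero_le_two ht]
  linear_combination (-t ^ (2*H)) * two_mul_two_rpow_sub_one (2*H)

lemma abs_subfBmQ_div_sub_le {H t h : ℝ} (hH0 : 0 < H) (hH1 : H < 1) (hh : 0 < h)
    (hht : h ≤ t) :
    |subfBmQ H t h / h ^ (2*H) - (4 - 2 ^ (2*H))| ≤ 36 := by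
  have hhu : 0 < h ^ (2*H) := Real.rpow_pos_of_pos hh _
  have hcoef : (2 : ℝ) ^ (2*H - 1) ≤ 2 := by
    simpa using Real.rpow_le_rpow_of_exponent_le one_le_two (show 2*H - 1 ≤ 1 by linarith)
  have hnum : |subfBmQ H t h - (4 - 2 ^ (2*H)) * h ^ (2*H)| ≤ 36 * h ^ (2*H) := by
    rw [subfBmQ_sub_eq H (hh.le.trans hht)]
    have h₁ := abs_add_rpow_add_sub_rpow_sub_two_mul_rpow_le (u := 2*H) (a := 2*t)
      (by linarith) (by linarith) hh (by linarith)
    have h₂ := abs_add_rpow_add_sub_rpow_sub_two_mul_rpow_le (u := 2*H) (by linarith)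
      (by linarith) hh hht
    calc _ ≤ 2 * |(2*t + h) ^ (2*H) + (2*t - h) ^ (2*H) - 2 * (2*t) ^ (2*H)|
          + 2 ^ (2*H - 1) * |(t + h) ^ (2*H) + (t - h) ^ (2*H) - 2 * t ^ (2*H)| := by
          refine (abs_sub _ _).trans_eq ?_
          rw [abs_mul, abs_mul, abs_two, abs_of_pos (Real.rpow_pos_of_pos two_pos _)]
      _ ≤ 2 * (9 * h ^ (2*H)) + 2 * (9 * h ^ (2*H)) := by gcongr
      _ = 36 * h ^ (2*H) := by ring
  rwa [show subfBmQ H t h / h ^ (2*H) - (4 - 2 ^ (2*H))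
      = (subfBmQ H t h - (4 - 2 ^ (2*H)) * h ^ (2*H)) / h ^ (2*H) by field_simp,
    abs_div, abs_of_pos hhu, div_le_iff₀ hhu]

lemma subfBmQ_self_div_sub {H h : ℝ} (hH0 : 0 < H) (hh : 0 < h) :
    subfBmQ H h h / h ^ (2*H) - (4 - 2 ^ (2*H)) = -fourthDiffRpow (2*H) / 2 := by
  have hhu : 0 < h ^ (2*H) := Real.rpow_pos_of_pos hh _
  have h4 : (4 : ℝ) ^ (2*H) = 2 ^ (2*H) * 2 ^ (2*H) := by
    rw [← Real.mul_rpow zero_le_two zero_le_two]; norm_num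
  rw [subfBmQ, fourthDiffRpow, show h + h = 2 * h by ring, show 2 * h + h = 3 * h by ring,
    show 2 * h - h = h by ring, sub_self, Real.zero_rpow (by positivity),
    Real.mul_rpow zero_le_two hh.le, Real.mul_rpow zero_le_three hh.le, h4,
    ← two_mul_two_rpow_sub_one (2*H)]
  field_simp
  ring

lemma le_biSup_of_forall_le {S : Set ℝ} {F : ℝ → ℝ} {M : ℝ} (hF : ∀ t ∈ S, F t ≤ M)
    {a : ℝ} (ha : a ∈ S) : F a ≤ ⨆ t ∈ S, F t :=
  le_ciSup₂ (f := fun t (_ : t ∈ S) => F t)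
    ⟨M, by
      simp only [mem_upperBounds, mem_iUnion, mem_range]
      rintro _ ⟨t, ht, rfl⟩
      exact hF t ht⟩ a ha

lemma subfBm_biSup_mem_Icc {H T h : ℝ} (hH0 : 0 < H) (hH1 : H < 1) (hh : 0 < h)
    (hhT : h ≤ T - h) :
    ⨆ t ∈ Icc h (T - h), |subfBmQ H t h / h ^ (2*H) - (4 - 2 ^ (2*H))|
      ∈ Icc (|fourthDiffRpow (2*H)| / 2) 36 := by
  have hbound (t : ℝ) (ht : t ∈ Icc h (T - h)) :
      |subfBmQ H t h / h ^ (2*H) - (4 - 2 ^ (2*H))| ≤ 36 :=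
    abs_subfBmQ_div_sub_le hH0 hH1 hh ht.1
  refine ⟨?_, Real.iSup_le (fun t => Real.iSup_le (hbound t) (by norm_num)) (by norm_num)⟩
  calc |fourthDiffRpow (2*H)| / 2
      = |subfBmQ H h h / h ^ (2*H) - (4 - 2 ^ (2*H))| := by
        rw [subfBmQ_self_div_sub hH0 hh, abs_div, abs_neg, abs_two]
    _ ≤ _ := le_biSup_of_forall_le hbound ⟨le_rfl, hhT⟩

/-- For sub-fractional Brownian motion with `H ≠ 1/2`, the sup over
`t ∈ [h, T−h]` of `|Q(t,h)/h^{2H} − (4 − 2^{2H})|` does not tend to `0` as `h ↓ 0`;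
indeed its liminf is positive. -/
theorem subfBm_second_diff_cutoff_necessary (H T : ℝ) (hH : H ∈ Set.Ioo (0:ℝ) 1)
    (hH' : H ≠ 1/2) (hT : 0 < T) :
    0 < liminf (fun h => ⨆ t ∈ Icc h (T - h), |subfBmQ H t h / h ^ (2*H) - (4 - 2 ^ (2*H))|)
          (nhdsWithin 0 (Ioi 0))
    ∧ ¬ Tendsto (fun h => ⨆ t ∈ Icc h (T - h), |subfBmQ H t h / h ^ (2*H) - (4 - 2 ^ (2*H))|)
          (nhdsWithin 0 (Ioi 0)) (nhds 0) := by
  obtain ⟨hH0, hH1⟩ := hH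
  have hc : 0 < |fourthDiffRpow (2*H)| / 2 := by
    have := fourthDiffRpow_ne_zero (u := 2*H) (by contrapose! hH'; linarith)
      (by linarith) (by linarith)
    positivity
  have hbounds : ∀ᶠ h in nhdsWithin 0 (Ioi 0),
      ⨆ t ∈ Icc h (T - h), |subfBmQ H t h / h ^ (2*H) - (4 - 2 ^ (2*H))|
        ∈ Icc (|fourthDiffRpow (2*H)| / 2) 36 := by
    filter_upwards [Ioo_mem_nhdsGT (half_pos hT)] with h hh
    exact subfBm_biSup_mem_Icc hH0 hH1 hh.1 (by linarith [hh.2])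
  have hliminf := hc.trans_le <| le_liminf_of_le
    (isCoboundedUnder_ge_of_eventually_le _ (hbounds.mono fun _ => And.right))
    (hbounds.mono fun _ => And.left)
  exact ⟨hliminf, fun htends => hliminf.ne' htends.liminf_eq⟩
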